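/- arXiv:1606.01647 — 2 statements merged into one kernel-verified Lean document; each statement's English description precedes it below -/
import Mathlib

section
/- Let M be a left R-module such that M has infinitely many nontrivial submodules and the clique number ω(M) of the intersection graph G(M) is finite. Then the chromatic number χ(M) of G(M) equals ω(M); that is, there exists a proper coloring of G(M) using exactly ω(M) colors, and no proper coloring with fewer colors exists. -/
/-!
A strictly descending chain of submodules is a clique, so when `ω(M)` is finite every nonzero
submodule contains a simple one, and there are infinitely many simple submodules. For simple
`E₁ ≠ E₂`, every simple submodule lies in `E₁ ⊔ E₂`; hence a vertex containing two simple
submodules contains the whole socle, and every other vertex contains exactly one simple submodule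
`E`. So `G(M)` is the join of the clique `W = socleVertices R M` of vertices containing the socle
with the disjoint union of the cliques `petal E` of the remaining vertices above `E`. Coloring `W`
by itself and each petal injectively into a largest petal `P` uses only the colors of the clique
`W ∪ P`, which gives `χ(M) = ω(M) = |W ∪ P|`.
-/

universe u v

/-- A clique of the intersection graph `G(M)`: a set of nontrivial submodules any two
distinct members of which have nonzero intersection. -/
def IsIntClique {R : Type u} [Ring R] {M : Type v} [AddCommGroup M] [Module R M]
    (C : Set (Submodule R M)) : Prop :=
  (∀ N ∈ C, N ≠ ⊥ ∧ N ≠ ⊤) ∧ ∀ N ∈ C, ∀ K ∈ C, N ≠ K → N ⊓ K ≠ ⊥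

/-- The clique number `ω(M)` of `G(M)`: the supremum of the cardinalities of cliques. -/
noncomputable def cliqueNumber (R : Type u) [Ring R] (M : Type v) [AddCommGroup M]
    [Module R M] : Cardinal.{v} :=
  sSup {c : Cardinal | ∃ C : Set (Submodule R M), IsIntClique C ∧ c = Cardinal.mk C}

/-- A proper coloring of `G(M)` by a type `α`: a map on nontrivial submodules giving
distinct values to distinct submodules with nonzero intersection. -/
def IsProperColoring {R : Type u} [Ring R] {M : Type v} [AddCommGroup M] [Module R M]
    {α : Type*} (f : {N : Submodule R M // N ≠ ⊥ ∧ N ≠ ⊤} → α) : Prop :=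
  ∀ N K : {N : Submodule R M // N ≠ ⊥ ∧ N ≠ ⊤},
    N ≠ K → (N : Submodule R M) ⊓ (K : Submodule R M) ≠ ⊥ → f N ≠ f K

/-- The chromatic number `χ(M)` of `G(M)`: the least cardinality of a set of colors
admitting a proper coloring. -/
noncomputable def chromaticNumber (R : Type u) [Ring R] (M : Type v) [AddCommGroup M]
    [Module R M] : Cardinal.{v} :=
  sInf {c : Cardinal | ∃ (α : Type v) (f : {N : Submodule R M // N ≠ ⊥ ∧ N ≠ ⊤} → α),
    IsProperColoring f ∧ c = Cardinal.mk α}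

universe w

section IntersectionGraph

variable {R : Type u} [Ring R] {M : Type v} [AddCommGroup M] [Module R M]

theorem IsIntClique.subset {C D : Set (Submodule R M)} (hD : IsIntClique D) (hCD : C ⊆ D) :
    IsIntClique C :=
  ⟨fun N hN => hD.1 N (hCD hN), fun N hN K hK => hD.2 N (hCD hN) K (hCD hK)⟩

theorem isIntClique_setOf_le {E : Submodule R M} (hE : E ≠ ⊥) :
    IsIntClique {N : Submodule R M | (N ≠ ⊥ ∧ N ≠ ⊤) ∧ E ≤ N} :=
  ⟨fun _ hN => hN.1, fun _ hN _ hK _ hNK => hE (le_bot_iff.mp (hNK ▸ le_inf hN.2 hK.2))⟩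

theorem IsIntClique.mk_le_cliqueNumber {C : Set (Submodule R M)} (hC : IsIntClique C) :
    Cardinal.mk C ≤ cliqueNumber R M :=
  le_csSup ⟨Cardinal.mk (Submodule R M), by rintro _ ⟨C, -, rfl⟩; exact Cardinal.mk_set_le C⟩
    ⟨C, hC, rfl⟩

theorem IsIntClique.encard_le_toENat_cliqueNumber {C : Set (Submodule R M)} (hC : IsIntClique C) :
    C.encard ≤ Cardinal.toENat (cliqueNumber R M) :=
  Cardinal.toENat.monotone' hC.mk_le_cliqueNumber

theorem IsIntClique.lift_mk_le_of_isProperColoring {C : Set (Submodule R M)}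
    (hC : IsIntClique C) {α : Type w} {f : {N : Submodule R M // N ≠ ⊥ ∧ N ≠ ⊤} → α}
    (hf : IsProperColoring f) :
    Cardinal.lift.{w} (Cardinal.mk C) ≤ Cardinal.lift.{v} (Cardinal.mk α) := by
  refine Cardinal.lift_mk_le_lift_mk_of_injective (f := fun N : C => f ⟨N, hC.1 N N.2⟩) ?_
  intro N K hNK
  by_contra hne
  exact hf _ _ (fun h => hne (Subtype.ext (Subtype.mk.inj h)))
    (hC.2 N N.2 K K.2 fun h => hne (Subtype.ext h)) hNK

theorem chromaticNumber_eq_and_cliqueNumber_eq {C : Set (Submodule R M)} (hC : IsIntClique C)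
    {α : Type v} {f : {N : Submodule R M // N ≠ ⊥ ∧ N ≠ ⊤} → α} (hf : IsProperColoring f)
    (hαC : Cardinal.mk α ≤ Cardinal.mk C) :
    chromaticNumber R M = Cardinal.mk α ∧ cliqueNumber R M = Cardinal.mk α := by
  have hclique {C' : Set (Submodule R M)} (hC' : IsIntClique C') {β : Type v}
      {g : {N : Submodule R M // N ≠ ⊥ ∧ N ≠ ⊤} → β} (hg : IsProperColoring g) :
      Cardinal.mk C' ≤ Cardinal.mk β := by
    simpa using hC'.lift_mk_le_of_isProperColoring (α := β) hg
  constructor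
  · refine le_antisymm (csInf_le (OrderBot.bddBelow _) ⟨α, f, hf, rfl⟩) ?_
    refine le_csInf ⟨_, α, f, hf, rfl⟩ ?_
    rintro _ ⟨β, g, hg, rfl⟩
    exact hαC.trans (hclique hC hg)
  · refine le_antisymm ?_ (hαC.trans hC.mk_le_cliqueNumber)
    refine csSup_le ⟨_, C, hC, rfl⟩ ?_
    rintro _ ⟨C', hC', rfl⟩
    exact hclique hC' hf

end IntersectionGraph

section ModularLattice

variable {α : Type*} [Lattice α] [OrderBot α] [IsModularLattice α] {a b c : α}

theorem IsAtom.inf_sup_eq_bot_of_inf_sup_eq_bot (ha : IsAtom a) (hb : IsAtom b) (hab : a ≠ b)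
    (hc : c ⊓ (a ⊔ b) = ⊥) : b ⊓ (a ⊔ c) = ⊥ := by
  refine disjoint_iff.mp (hb.not_le_iff_disjoint.mp fun hbac => hab ?_)
  have hba : b ≤ a := by
    calc b ≤ (a ⊔ c) ⊓ (a ⊔ b) := le_inf hbac le_sup_right
      _ = a := by rw [sup_inf_assoc_of_le c le_sup_left, hc, sup_bot_eq]
  exact ((ha.le_iff_eq hb.1).mp hba).symm

theorem sup_inf_sup_eq_right_of_inf_sup_eq_bot (h : b ⊓ (a ⊔ c) = ⊥) :
    (a ⊔ c) ⊓ (b ⊔ c) = c := by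
  rw [inf_comm, sup_comm b, sup_inf_assoc_of_le b le_sup_right, h, sup_bot_eq]

end ModularLattice

section FiniteCliqueNumber

variable {R : Type u} [Ring R] {M : Type v} [AddCommGroup M] [Module R M]

theorem IsIntClique.finite (homega : cliqueNumber R M < Cardinal.aleph0)
    {C : Set (Submodule R M)} (hC : IsIntClique C) : C.Finite :=
  Cardinal.lt_aleph0_iff_set_finite.mp (hC.mk_le_cliqueNumber.trans_lt homega)

theorem wellFoundedLT_submodule (homega : cliqueNumber R M < Cardinal.aleph0) :
    WellFoundedLT (Submodule R M) := by
  refine ⟨wellFounded_iff_isEmpty_descending_chain.mpr ⟨fun ⟨N, hN⟩ => ?_⟩⟩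
  have hanti : StrictAnti N := strictAnti_nat_of_succ_lt hN
  have hclique : IsIntClique (Set.range fun n => N (n + 1)) := by
    refine ⟨?_, ?_⟩
    · rintro _ ⟨n, rfl⟩
      exact ⟨(hN (n + 1)).ne_bot, (hN n).ne_top⟩
    · rintro _ ⟨m, rfl⟩ _ ⟨n, rfl⟩ - hmn
      refine (hN (max m n + 1)).ne_bot (le_bot_iff.mp (hmn ▸ le_inf ?_ ?_)) <;>
        exact hanti.antitone (by omega)
  exact Set.infinite_range_of_injective (hanti.injective.comp (add_left_injective 1))
    (hclique.finite homega)

theorem exists_isAtom_le (homega : cliqueNumber R M < Cardinal.aleph0) {N : Submodule R M}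
    (hN : N ≠ ⊥) : ∃ E, IsAtom E ∧ E ≤ N :=
  have := wellFoundedLT_submodule homega
  ((isAtomic_of_orderBot_wellFounded_lt wellFounded_lt).eq_bot_or_exists_atom_le N).resolve_left hN

theorem setOf_isAtom_infinite (hinf : {N : Submodule R M | N ≠ ⊥ ∧ N ≠ ⊤}.Infinite)
    (homega : cliqueNumber R M < Cardinal.aleph0) : {E : Submodule R M | IsAtom E}.Infinite := by
  intro hfin
  refine hinf ((hfin.biUnion fun E hE => (isIntClique_setOf_le hE.1).finite homega).subset ?_)
  intro N hN
  obtain ⟨E, hE, hEN⟩ := exists_isAtom_le homega hN.1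
  exact Set.mem_biUnion hE ⟨hN, hEN⟩

-- `E ↦ E ⊔ Z` embeds the submodules below `C` into the finite clique of vertices above `Z`.
theorem finite_Iio_of_inf_eq_bot (homega : cliqueNumber R M < Cardinal.aleph0)
    {Z C : Submodule R M} (hZ : Z ≠ ⊥) (hZC : Z ⊓ C = ⊥) : (Set.Iio C).Finite := by
  have hmod : ∀ E ≤ C, (E ⊔ Z) ⊓ C = E := fun E hE => by
    rw [sup_inf_assoc_of_le Z hE, hZC, sup_bot_eq]
  refine ((isIntClique_setOf_le hZ).finite homega).of_injOn (f := (· ⊔ Z)) ?_ ?_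
  · intro E (hE : E < C)
    refine ⟨⟨fun h => hZ (le_bot_iff.mp (h ▸ le_sup_right)), fun (h : E ⊔ Z = ⊤) => hE.ne ?_⟩,
      le_sup_right⟩
    rw [← hmod E hE.le, h, top_inf_eq]
  · intro E (hE : E < C) E' (hE' : E' < C) h
    rw [← hmod E hE.le, ← hmod E' hE'.le]
    exact congrArg (· ⊓ C) h

-- If an atom `Z` missed `D = E₁ ⊔ E₂`, then `D` would have only finitely many submodules, so
-- infinitely many atoms `Y` would miss `D`; but each such `Y = (E₁ ⊔ Y) ⊓ (E₂ ⊔ Y)` is recovered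
-- from a pair of vertices of the finite cliques above `E₁` and above `E₂`.
theorem IsAtom.le_sup_of_isAtom (hinf : {N : Submodule R M | N ≠ ⊥ ∧ N ≠ ⊤}.Infinite)
    (homega : cliqueNumber R M < Cardinal.aleph0) {E₁ E₂ Z : Submodule R M} (hZ : IsAtom Z)
    (h₁ : IsAtom E₁) (h₂ : IsAtom E₂) (hne : E₁ ≠ E₂) : Z ≤ E₁ ⊔ E₂ := by
  by_contra hZD
  have hbelow : {E | IsAtom E ∧ E ≤ E₁ ⊔ E₂}.Finite := by
    refine ((finite_Iio_of_inf_eq_bot homega hZ.1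
      (disjoint_iff.mp (hZ.not_le_iff_disjoint.mp hZD))).insert (E₁ ⊔ E₂)).subset ?_
    intro E hE
    rw [Set.Iio_insert]
    exact hE.2
  have hmiss : {Y | IsAtom Y ∧ Y ⊓ (E₁ ⊔ E₂) = ⊥}.Infinite := by
    refine ((setOf_isAtom_infinite hinf homega).sdiff hbelow).mono ?_
    intro Y ⟨hY, hYD⟩
    exact ⟨hY, disjoint_iff.mp (hY.not_le_iff_disjoint.mp fun h => hYD ⟨hY, h⟩)⟩
  have hvertex {A B Y : Submodule R M} (hA : IsAtom A) (hB : B ≠ ⊥) (hBAY : B ⊓ (A ⊔ Y) = ⊥) :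
      A ⊔ Y ∈ {N : Submodule R M | (N ≠ ⊥ ∧ N ≠ ⊤) ∧ A ≤ N} :=
    ⟨⟨hA.1 ∘ le_bot_iff.mp ∘ (le_sup_left.trans ·.le),
      fun h => hB (by rwa [h, inf_top_eq] at hBAY)⟩, le_sup_left⟩
  refine hmiss (Set.Finite.of_injOn (f := fun Y => (E₁ ⊔ Y, E₂ ⊔ Y)) ?_ ?_
    (((isIntClique_setOf_le h₁.1).finite homega).prod
      ((isIntClique_setOf_le h₂.1).finite homega)))
  · intro Y ⟨hY, hYD⟩
    exact ⟨hvertex h₁ h₂.1 (h₁.inf_sup_eq_bot_of_inf_sup_eq_bot h₂ hne hYD),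
      hvertex h₂ h₁.1 (h₂.inf_sup_eq_bot_of_inf_sup_eq_bot h₁ hne.symm (sup_comm E₁ E₂ ▸ hYD))⟩
  · rintro Y ⟨-, hYD⟩ Y' ⟨-, hY'D⟩ h
    rw [← sup_inf_sup_eq_right_of_inf_sup_eq_bot (h₁.inf_sup_eq_bot_of_inf_sup_eq_bot h₂ hne hYD),
      ← sup_inf_sup_eq_right_of_inf_sup_eq_bot (h₁.inf_sup_eq_bot_of_inf_sup_eq_bot h₂ hne hY'D)]
    simp only [Prod.mk.injEq] at h
    rw [h.1, h.2]

def socleVertices (R : Type u) [Ring R] (M : Type v) [AddCommGroup M] [Module R M] :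
    Set (Submodule R M) :=
  {N | (N ≠ ⊥ ∧ N ≠ ⊤) ∧ ∀ E : Submodule R M, IsAtom E → E ≤ N}

def petal (E : Submodule R M) : Set (Submodule R M) :=
  {N | (N ≠ ⊥ ∧ N ≠ ⊤) ∧ N ∉ socleVertices R M ∧ E ≤ N}

theorem isIntClique_petal {E : Submodule R M} (hE : E ≠ ⊥) : IsIntClique (petal E) :=
  (isIntClique_setOf_le hE).subset fun _ hN => ⟨hN.1, hN.2.2⟩

theorem eq_of_mem_petal_of_inf_ne_bot (hinf : {N : Submodule R M | N ≠ ⊥ ∧ N ≠ ⊤}.Infinite)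
    (homega : cliqueNumber R M < Cardinal.aleph0) {A B N K : Submodule R M} (hA : IsAtom A)
    (hB : IsAtom B) (hN : N ∈ petal A) (hK : K ∈ petal B) (hNK : N ⊓ K ≠ ⊥) : A = B := by
  have hunique {N E F : Submodule R M} (hN : N ∈ petal E) (hE : IsAtom E) (hF : IsAtom F)
      (hFN : F ≤ N) : E = F := by
    by_contra hEF
    exact hN.2.1 ⟨hN.1, fun Z hZ => (hZ.le_sup_of_isAtom hinf homega hE hF hEF).trans
      (sup_le hN.2.2 hFN)⟩
  obtain ⟨Z, hZ, hZNK⟩ := exists_isAtom_le homega hNK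
  exact (hunique hN hA hZ (hZNK.trans inf_le_left)).trans
    (hunique hK hB hZ (hZNK.trans inf_le_right)).symm

theorem exists_isAtom_forall_encard_petal_le
    (hinf : {N : Submodule R M | N ≠ ⊥ ∧ N ≠ ⊤}.Infinite)
    (homega : cliqueNumber R M < Cardinal.aleph0) :
    ∃ E : Submodule R M, IsAtom E ∧
      ∀ A : Submodule R M, IsAtom A → (petal A).encard ≤ (petal E).encard := by
  set s := (fun E : Submodule R M => (petal E).encard) '' {E | IsAtom E}
  have : Nonempty s := ((setOf_isAtom_infinite hinf homega).nonempty.image _).to_subtype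
  have hs : sSup s < ⊤ := by
    refine lt_of_le_of_lt (sSup_le ?_) (Cardinal.toENat_lt_top.mpr homega)
    rintro _ ⟨A, hA, rfl⟩
    exact (isIntClique_petal hA.1).encard_le_toENat_cliqueNumber
  obtain ⟨E, hE, hEs⟩ := ENat.sSup_mem_of_nonempty_of_lt_top hs
  exact ⟨E, hE, fun A hA => (le_sSup (s := s) ⟨A, hA, rfl⟩).trans hEs.ge⟩

theorem exists_isProperColoring_mem_isIntClique
    (hinf : {N : Submodule R M | N ≠ ⊥ ∧ N ≠ ⊤}.Infinite)
    (homega : cliqueNumber R M < Cardinal.aleph0) :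
    ∃ (C : Set (Submodule R M)) (f : {N : Submodule R M // N ≠ ⊥ ∧ N ≠ ⊤} → Submodule R M),
      IsIntClique C ∧ IsProperColoring f ∧ ∀ N, f N ∈ C := by
  classical
  obtain ⟨E, hE, hEmax⟩ := exists_isAtom_forall_encard_petal_le hinf homega
  choose a ha using fun N : {N : Submodule R M // N ≠ ⊥ ∧ N ≠ ⊤} => exists_isAtom_le homega N.2.1
  choose g hgmaps hginj using fun A (hA : IsAtom A) =>
    ((isIntClique_petal hA.1).finite homega).exists_injOn_of_encard_le (hEmax A hA)
  have hpetal {N : {N : Submodule R M // N ≠ ⊥ ∧ N ≠ ⊤}} (hN : N.1 ∉ socleVertices R M) :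
      N.1 ∈ petal (a N) := ⟨N.2, hN, (ha N).2⟩
  refine ⟨socleVertices R M ∪ petal E,
    fun N => if N.1 ∈ socleVertices R M then N else g (a N) (ha N).1 N, ?_, ?_, ?_⟩
  · refine (isIntClique_setOf_le hE.1).subset ?_
    rintro N (hN | hN)
    · exact ⟨hN.1, hN.2 E hE⟩
    · exact ⟨hN.1, hN.2.2⟩
  · intro N K hNK hadj hfNK
    by_cases hN : N.1 ∈ socleVertices R M <;> by_cases hK : K.1 ∈ socleVertices R M <;>
      simp only [hN, hK, if_true, if_false] at hfNK
    · exact hNK (Subtype.ext hfNK)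
    · exact (hgmaps _ (ha K).1 (hpetal hK)).2.1 (hfNK ▸ hN)
    · exact (hgmaps _ (ha N).1 (hpetal hN)).2.1 (hfNK ▸ hK)
    · have haNK : a N = a K :=
        eq_of_mem_petal_of_inf_ne_bot hinf homega (ha N).1 (ha K).1 (hpetal hN) (hpetal hK) hadj
      simp only [haNK] at hfNK
      exact hNK (Subtype.ext (hginj _ (ha K).1 (haNK ▸ hpetal hN) (hpetal hK) hfNK))
  · intro N
    by_cases hN : N.1 ∈ socleVertices R M
    · simp only [hN, if_true]
      exact Or.inl hN
    · simp only [hN, if_false]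
      exact Or.inr (hgmaps _ (ha N).1 (hpetal hN))

end FiniteCliqueNumber

/-- If `M` has infinitely many nontrivial submodules and finite clique number
`ω(M)`, then `χ(M) = ω(M)`: there is a proper coloring with exactly `ω(M)` colors and none
with fewer. -/
theorem statement16 {R : Type u} [Ring R] {M : Type v} [AddCommGroup M] [Module R M]
    (hinf : {N : Submodule R M | N ≠ ⊥ ∧ N ≠ ⊤}.Infinite)
    (homega : cliqueNumber R M < Cardinal.aleph0) :
    chromaticNumber R M = cliqueNumber R M ∧
    (∃ (α : Type v) (f : {N : Submodule R M // N ≠ ⊥ ∧ N ≠ ⊤} → α),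
      IsProperColoring f ∧ Cardinal.mk α = cliqueNumber R M) := by
  obtain ⟨C, f, hC, hf, hfC⟩ := exists_isProperColoring_mem_isIntClique hinf homega
  have hf' : IsProperColoring (Set.rangeFactorization f) :=
    fun N K hNK hadj h => hf N K hNK hadj (congrArg Subtype.val h)
  obtain ⟨hχ, hω⟩ := chromaticNumber_eq_and_cliqueNumber_eq hC hf'
    (Cardinal.mk_le_mk_of_subset (Set.range_subset_iff.mpr hfC))
  exact ⟨hχ.trans hω.symm, Set.range f, _, hf', hω.symm⟩
end

section
/- Let M be a left R-module in which every nonzero submodule contains a uniform submodule, and suppose ω(M) ≤ ω^c(M) (as cardinals). Then ω^c(M) = χ^c(M); that is, the clique number and the chromatic number of the complement graph G^c(M) of the intersection graph of M coincide. -/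
universe u v

/-- A clique of the complement graph `G^c(M)`: a set of nontrivial submodules any two
distinct members of which have zero intersection. -/
def IsIntCliqueC {R : Type u} [Ring R] {M : Type v} [AddCommGroup M] [Module R M]
    (C : Set (Submodule R M)) : Prop :=
  (∀ N ∈ C, N ≠ ⊥ ∧ N ≠ ⊤) ∧ ∀ N ∈ C, ∀ K ∈ C, N ≠ K → N ⊓ K = ⊥

/-- The clique number `ω^c(M)` of the complement graph `G^c(M)`. -/
noncomputable def cliqueNumberC (R : Type u) [Ring R] (M : Type v) [AddCommGroup M]
    [Module R M] : Cardinal.{v} :=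
  sSup {c : Cardinal | ∃ C : Set (Submodule R M), IsIntCliqueC C ∧ c = Cardinal.mk C}

/-- The chromatic number `χ^c(M)` of the complement graph `G^c(M)`: the least cardinality
of a type of colors for which there is a map on nontrivial submodules giving distinct
values to distinct submodules with zero intersection. -/
noncomputable def chromaticNumberC (R : Type u) [Ring R] (M : Type v) [AddCommGroup M]
    [Module R M] : Cardinal.{v} :=
  sInf {c : Cardinal | ∃ (α : Type v) (f : {N : Submodule R M // N ≠ ⊥ ∧ N ≠ ⊤} → α),
    (∀ N K : {N : Submodule R M // N ≠ ⊥ ∧ N ≠ ⊤},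
      N ≠ K → (N : Submodule R M) ⊓ (K : Submodule R M) = ⊥ → f N ≠ f K) ∧
    c = Cardinal.mk α}

/-!
Choose, by Zorn's lemma, a maximal family `F` of pairwise disjoint proper uniform submodules; it
is a clique of `G^c(M)`. Every nontrivial submodule `N` contains a uniform submodule, which is
proper, so by maximality `N` meets some member of `F`. Colouring `N` by such a member is a proper
colouring of `G^c(M)`: two submodules with the same colour `U` meet `U` in nonzero submodules,
which intersect because `U` is uniform. Hence `χ^c(M) ≤ #F ≤ ω^c(M) ≤ χ^c(M)`.
-/

open Cardinal

variable {R : Type u} [Ring R] {M : Type v} [AddCommGroup M] [Module R M]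

def Submodule.IsUniform (U : Submodule R M) : Prop :=
  U ≠ ⊥ ∧ ∀ A B : Submodule R M, A ≤ U → B ≤ U → A ≠ ⊥ → B ≠ ⊥ → A ⊓ B ≠ ⊥

lemma mk_le_cliqueNumberC {C : Set (Submodule R M)} (hC : IsIntCliqueC C) :
    #C ≤ cliqueNumberC R M :=
  le_csSup ⟨#(Submodule R M), by rintro c ⟨D, -, rfl⟩; exact mk_set_le D⟩ ⟨C, hC, rfl⟩

lemma cliqueNumberC_le_chromaticNumberC : cliqueNumberC R M ≤ chromaticNumberC R M := by
  refine le_csInf ⟨_, _, id, fun _ _ hne _ => hne, rfl⟩ ?_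
  rintro c ⟨α, f, hf, rfl⟩
  refine csSup_le ⟨0, ∅, ⟨fun _ h => h.elim, fun _ h => h.elim⟩, by simp⟩ ?_
  rintro c ⟨C, hC, rfl⟩
  refine mk_le_of_injective (f := fun N : C => f ⟨N, hC.1 N N.2⟩) fun N K hfNK =>
    Subtype.ext <| by_contra fun hNK => hf _ _ (by simpa using hNK) (hC.2 N N.2 K K.2 hNK) hfNK

lemma chromaticNumberC_le_mk_of_forall_inf_ne_bot (F : Set (Submodule R M))
    (hF : ∀ U ∈ F, U.IsUniform)
    (hcover : ∀ N : Submodule R M, N ≠ ⊥ → N ≠ ⊤ → ∃ U ∈ F, N ⊓ U ≠ ⊥) :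
    chromaticNumberC R M ≤ #F := by
  choose colour hcolourF hcolour using fun N : {N : Submodule R M // N ≠ ⊥ ∧ N ≠ ⊤} =>
    hcover N N.2.1 N.2.2
  refine csInf_le' ⟨F, fun N => ⟨colour N, hcolourF N⟩, fun N K _ hNK hNKcolour => ?_, rfl⟩
  have hsame : colour N = colour K := congrArg Subtype.val hNKcolour
  refine (hF _ (hcolourF N)).2 _ _ inf_le_right inf_le_right (hcolour N)
    (by rw [hsame]; exact hcolour K) ?_
  exact le_bot_iff.mp <| (inf_le_inf inf_le_left inf_le_left).trans hNK.le

lemma isIntCliqueC_sUnion {c : Set (Set (Submodule R M))} (hc : IsChain (· ⊆ ·) c)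
    (hcC : ∀ C ∈ c, IsIntCliqueC C) : IsIntCliqueC (⋃₀ c) := by
  refine ⟨fun N ⟨C, hC, hN⟩ => (hcC C hC).1 N hN, ?_⟩
  rintro N ⟨C, hC, hN⟩ K ⟨D, hD, hK⟩ hNK
  rcases hc.total hC hD with hCD | hDC
  · exact (hcC D hD).2 N (hCD hN) K hK hNK
  · exact (hcC C hC).2 N hN K (hDC hK) hNK

lemma IsIntCliqueC.insert {C : Set (Submodule R M)} (hC : IsIntCliqueC C) {N : Submodule R M}
    (hN : N ≠ ⊥ ∧ N ≠ ⊤) (hdisj : ∀ U ∈ C, N ⊓ U = ⊥) : IsIntCliqueC (insert N C) := by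
  refine ⟨Set.forall_mem_insert.mpr ⟨hN, hC.1⟩, ?_⟩
  rintro K (rfl | hK) L (rfl | hL) hKL
  · exact absurd rfl hKL
  · exact hdisj L hL
  · exact inf_comm K _ ▸ hdisj K hK
  · exact hC.2 K hK L hL hKL

lemma exists_isIntCliqueC_uniform_forall_inf_ne_bot
    (hu : ∀ N : Submodule R M, N ≠ ⊥ → ∃ U, U ≤ N ∧ U.IsUniform) :
    ∃ F : Set (Submodule R M), IsIntCliqueC F ∧ (∀ U ∈ F, U.IsUniform) ∧
      ∀ N : Submodule R M, N ≠ ⊥ → N ≠ ⊤ → ∃ U ∈ F, N ⊓ U ≠ ⊥ := by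
  obtain ⟨F, ⟨hFclique, hFunif⟩, hFmax⟩ :
      ∃ F, Maximal (fun C : Set (Submodule R M) => IsIntCliqueC C ∧ ∀ U ∈ C, U.IsUniform) F := by
    refine zorn_subset _ fun c hc hchain => ⟨⋃₀ c, ⟨?_, ?_⟩, fun C => Set.subset_sUnion_of_mem⟩
    · exact isIntCliqueC_sUnion hchain fun C hC => (hc hC).1
    · exact fun U ⟨C, hC, hU⟩ => (hc hC).2 U hU
  refine ⟨F, hFclique, hFunif, fun N hN hNtop => ?_⟩
  obtain ⟨U, hUN, hU⟩ := hu N hN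
  by_contra! hdisj
  have hUdisj : ∀ V ∈ F, U ⊓ V = ⊥ := fun V hV =>
    le_bot_iff.mp <| hdisj V hV ▸ inf_le_inf_right V hUN
  have hUtop : U ≠ ⊤ := fun h => hNtop (top_le_iff.mp (h ▸ hUN))
  have hUF : U ∈ F := hFmax
    ⟨hFclique.insert ⟨hU.1, hUtop⟩ hUdisj, Set.forall_mem_insert.mpr ⟨hU, hFunif⟩⟩
    (Set.subset_insert U F) (Set.mem_insert U F)
  exact hU.1 (inf_idem U ▸ hUdisj U hUF)

theorem statement17_general {R : Type u} [Ring R] {M : Type v} [AddCommGroup M] [Module R M]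
    (hu : ∀ N : Submodule R M, N ≠ ⊥ → ∃ U : Submodule R M, U ≤ N ∧ U ≠ ⊥ ∧
      (∀ A B : Submodule R M, A ≤ U → B ≤ U → A ≠ ⊥ → B ≠ ⊥ → A ⊓ B ≠ ⊥)) :
    cliqueNumberC R M = chromaticNumberC R M := by
  obtain ⟨F, hFclique, hFunif, hcover⟩ := exists_isIntCliqueC_uniform_forall_inf_ne_bot hu
  exact cliqueNumberC_le_chromaticNumberC.antisymm <|
    (chromaticNumberC_le_mk_of_forall_inf_ne_bot F hFunif hcover).trans
      (mk_le_cliqueNumberC hFclique)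

/-- Let `M` be a module in which every nonzero submodule contains a (nonzero)
uniform submodule, and suppose `ω(M) ≤ ω^c(M)`.  Then `ω^c(M) = χ^c(M)`. -/
theorem statement17 {R : Type u} [Ring R] {M : Type v} [AddCommGroup M] [Module R M]
    (hu : ∀ N : Submodule R M, N ≠ ⊥ → ∃ U : Submodule R M, U ≤ N ∧ U ≠ ⊥ ∧
      (∀ A B : Submodule R M, A ≤ U → B ≤ U → A ≠ ⊥ → B ≠ ⊥ → A ⊓ B ≠ ⊥))
    (hle : cliqueNumber R M ≤ cliqueNumberC R M) :
    cliqueNumberC R M = chromaticNumberC R M :=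
  statement17_general hu
end
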